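/- arXiv:1412.7608 — 3 statements merged into one kernel-verified Lean document; each statement's English description precedes it below -/
import Mathlib

section
/- Let $a > -1$ and $\alpha \in (0,1]$ be constants, and let $f \in C^{0,\alpha}(\bar G_r)$ satisfy $f(y',0) = 0$. Define $F(y',t) = t^{-(a+1)} \int_0^t s^a f(y',s)\, ds$ for $(y',t) \in G_r$. Then $F \in C^{0,\alpha}(\bar G_r)$ (after extending $F$ continuously by $0$ to $t=0$). -/
/-!
Substituting `s = t u` rewrites `F(y', t)` as the weighted mean `∫₀¹ u^a f(y', t u) du`, and this
formula stays valid at `t = 0` because `f(y', 0) = 0`. For `u ∈ [0, 1]` the rescaling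
`(y', t) ↦ (y', t u)` does not increase distances and keeps `closure G_r` invariant, so the mean
inherits the Hölder bound of `f` with constant `C_f ∫₀¹ u^a du = C_f / (a + 1)`.
-/

open Set Metric

def Gset (m : ℕ) (r : ℝ) : Set (EuclideanSpace ℝ (Fin m) × ℝ) :=
  (Metric.ball (0 : EuclideanSpace ℝ (Fin m)) r) ×ˢ (Set.Ioo (0 : ℝ) r)

open scoped NNReal

theorem HolderOnWith.of_dist_le {X Y : Type*} [PseudoMetricSpace X] [PseudoMetricSpace Y]
    {C β : ℝ≥0} {f : X → Y} {s : Set X}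
    (h : ∀ x ∈ s, ∀ y ∈ s, dist (f x) (f y) ≤ C * dist x y ^ (β : ℝ)) :
    HolderOnWith C β f s := by
  intro x hx y hy
  rw [edist_nndist, edist_nndist, ← ENNReal.coe_rpow_of_nonneg _ β.coe_nonneg,
    ← ENNReal.coe_mul, ENNReal.coe_le_coe, ← NNReal.coe_le_coe]
  push_cast
  exact h x hx y hy

theorem HolderOnWith.congr {X Y : Type*} [PseudoEMetricSpace X] [PseudoEMetricSpace Y]
    {C β : ℝ≥0} {f g : X → Y} {s : Set X} (hf : HolderOnWith C β f s) (hfg : EqOn f g s) :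
    HolderOnWith C β g s := by
  intro x hx y hy
  rw [← hfg hx, ← hfg hy]
  exact hf x hx y hy

theorem Prod.dist_mk_mul_le {E : Type*} [PseudoMetricSpace E] (p q : E × ℝ) {u : ℝ}
    (hu : |u| ≤ 1) : dist (p.1, p.2 * u) (q.1, q.2 * u) ≤ dist p q := by
  rw [Prod.dist_eq, Prod.dist_eq, Real.dist_eq, Real.dist_eq, ← sub_mul, abs_mul]
  exact max_le_max le_rfl (mul_le_of_le_one_right (abs_nonneg _) hu)

theorem abs_integral_rpow_mul_sub_le {a K : ℝ} (ha : -1 < a) {g h : ℝ → ℝ}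
    (hg : ContinuousOn g (Icc 0 1)) (hh : ContinuousOn h (Icc 0 1))
    (hgh : ∀ u ∈ Ioc (0 : ℝ) 1, |g u - h u| ≤ K) :
    |(∫ u in (0 : ℝ)..1, u ^ a * g u) - ∫ u in (0 : ℝ)..1, u ^ a * h u| ≤ K / (a + 1) := by
  have hw : IntervalIntegrable (fun u : ℝ => u ^ a) MeasureTheory.volume 0 1 :=
    intervalIntegral.intervalIntegrable_rpow' ha
  rw [uIcc_of_le zero_le_one |>.symm] at hg hh
  rw [← intervalIntegral.integral_sub (hw.mul_continuousOn hg) (hw.mul_continuousOn hh),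
    ← Real.norm_eq_abs]
  calc ‖∫ u in (0 : ℝ)..1, u ^ a * g u - u ^ a * h u‖
      ≤ ∫ u in (0 : ℝ)..1, u ^ a * K := by
        refine intervalIntegral.norm_integral_le_of_norm_le zero_le_one
          (Filter.Eventually.of_forall fun u hu => ?_) (hw.mul_const K)
        rw [← mul_sub, norm_mul, Real.norm_of_nonneg (Real.rpow_nonneg hu.1.le a),
          Real.norm_eq_abs]
        exact mul_le_mul_of_nonneg_left (hgh u hu) (Real.rpow_nonneg hu.1.le a)
    _ = K / (a + 1) := by
        rw [intervalIntegral.integral_mul_const, integral_rpow (Or.inl ha), Real.one_rpow,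
          Real.zero_rpow (by linarith)]
        ring

theorem HolderOnWith.integral_rpow_mul_comp_mul {E : Type*} [PseudoMetricSpace E] {a : ℝ}
    (ha : -1 < a) {f : E × ℝ → ℝ} {C β : ℝ≥0} {s : Set (E × ℝ)} (hf : HolderOnWith C β f s)
    (hβ : 0 < β) (hs : ∀ p ∈ s, ∀ u ∈ Icc (0 : ℝ) 1, (p.1, p.2 * u) ∈ s) :
    HolderOnWith (C / (a + 1).toNNReal) β
      (fun p => ∫ u in (0 : ℝ)..1, u ^ a * f (p.1, p.2 * u)) s := by
  have hcont : ∀ p ∈ s, ContinuousOn (fun u : ℝ => f (p.1, p.2 * u)) (Icc 0 1) :=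
    fun p hp => (hf.continuousOn hβ).comp (by fun_prop) (hs p hp)
  refine HolderOnWith.of_dist_le fun p hp q hq => ?_
  rw [Real.dist_eq, NNReal.coe_div, Real.coe_toNNReal _ (by linarith), div_mul_eq_mul_div]
  refine abs_integral_rpow_mul_sub_le ha (hcont p hp) (hcont q hq) fun u hu => ?_
  have hu' : u ∈ Icc (0 : ℝ) 1 := Ioc_subset_Icc_self hu
  rw [← Real.dist_eq]
  exact hf.dist_le_of_le (hs p hp u hu') (hs q hq u hu')
    (Prod.dist_mk_mul_le p q (abs_le.mpr ⟨by linarith [hu.1], hu.2⟩))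

theorem rpow_neg_mul_integral_rpow_mul_eq {a t : ℝ} (ht : 0 ≤ t) {g : ℝ → ℝ} (hg : g 0 = 0) :
    t ^ (-(a + 1)) * (∫ s in (0 : ℝ)..t, s ^ a * g s) = ∫ u in (0 : ℝ)..1, u ^ a * g (t * u) := by
  rcases ht.eq_or_lt with rfl | ht
  · simp [hg]
  have hrescale : ∀ u ∈ uIcc (0 : ℝ) 1,
      t ^ (-a) * ((u * t) ^ a * g (u * t)) = u ^ a * g (t * u) := by
    intro u hu
    rw [uIcc_of_le zero_le_one] at hu
    rw [mul_comm u t, Real.mul_rpow ht.le hu.1, ← mul_assoc, ← mul_assoc, ← Real.rpow_add ht]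
    simp
  calc t ^ (-(a + 1)) * (∫ s in (0 : ℝ)..t, s ^ a * g s)
      = t ^ (-a) * (t⁻¹ • ∫ s in (0 : ℝ)..t, s ^ a * g s) := by
        rw [smul_eq_mul, ← mul_assoc, neg_add, Real.rpow_add ht, Real.rpow_neg_one]
    _ = ∫ u in (0 : ℝ)..1, t ^ (-a) * ((u * t) ^ a * g (u * t)) := by
        rw [intervalIntegral.integral_const_mul,
          intervalIntegral.integral_comp_mul_right (fun s => s ^ a * g s) ht.ne', zero_mul, one_mul]
    _ = ∫ u in (0 : ℝ)..1, u ^ a * g (t * u) := intervalIntegral.integral_congr hrescale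

theorem closure_Gset (m : ℕ) {r : ℝ} (hr : 0 < r) :
    closure (Gset m r) = closure (ball (0 : EuclideanSpace ℝ (Fin m)) r) ×ˢ Icc 0 r := by
  rw [Gset, closure_prod_eq, closure_Ioo hr.ne]

theorem mk_mul_mem_closure_Gset {m : ℕ} {r : ℝ} (hr : 0 < r) :
    ∀ p ∈ closure (Gset m r), ∀ u ∈ Icc (0 : ℝ) 1, (p.1, p.2 * u) ∈ closure (Gset m r) := by
  rw [closure_Gset m hr]
  rintro p ⟨hp₁, hp₂⟩ u hu
  exact ⟨hp₁, mul_nonneg hp₂.1 hu.1, (mul_le_of_le_one_right hp₂.1 hu.2).trans hp₂.2⟩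

/-- Lemma A.2 (case `a > -1`): if `f` is `α`-Hölder on `closure G_r` and vanishes
at `t = 0`, then `F(y',t) = t^{-(a+1)} ∫_0^t s^a f(y',s) ds` is `α`-Hölder on
`closure G_r` (the formula extends by `0` at `t = 0`). -/
theorem stmt_1 {m : ℕ} {r a α : ℝ} (hr : 0 < r) (ha : -1 < a)
    (hα : α ∈ Set.Ioc (0 : ℝ) 1)
    {f : EuclideanSpace ℝ (Fin m) × ℝ → ℝ} {Cf : NNReal}
    (hf : HolderOnWith Cf ⟨α, le_of_lt hα.1⟩ f (closure (Gset m r)))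
    (hzero : ∀ y' ∈ closure (Metric.ball (0 : EuclideanSpace ℝ (Fin m)) r), f (y', 0) = 0) :
    ∃ C : NNReal, HolderOnWith C ⟨α, le_of_lt hα.1⟩
      (fun p : EuclideanSpace ℝ (Fin m) × ℝ =>
        p.2 ^ (-(a + 1)) * ∫ s in (0 : ℝ)..p.2, s ^ a * f (p.1, s))
      (closure (Gset m r)) := by
  refine ⟨_, (hf.integral_rpow_mul_comp_mul ha hα.1 (mk_mul_mem_closure_Gset hr)).congr
    fun p hp => ?_⟩
  rw [closure_Gset m hr] at hp
  exact (rpow_neg_mul_integral_rpow_mul_eq (g := fun s => f (p.1, s)) hp.2.1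
    (hzero p.1 hp.1)).symm
end

section
/- Let $a \le -2$ and $\alpha \in (0,1)$ be constants, and let $f \in C^{0,\alpha}(\bar G_r)$ with $f(y',0) = 0$. Define $F(y',t) = t^{-(a+1)} \int_t^r s^a f(y',s)\, ds$. Then $F \in C^{0,\alpha}(\bar G_r)$. -/
open Set Metric MeasureTheory intervalIntegral
open scoped NNReal Interval ENNReal

private lemma holderOnWith_dist_le {X Y : Type*} [PseudoMetricSpace X] [PseudoMetricSpace Y]
    {C r0 : ℝ≥0} {f : X → Y} {s : Set X} (h : HolderOnWith C r0 f s)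
    {x y : X} (hx : x ∈ s) (hy : y ∈ s) :
    dist (f x) (f y) ≤ C * dist x y ^ (r0 : ℝ) := by
  have h2 := h.edist_le hx hy
  rw [edist_dist, edist_dist, ENNReal.ofReal_rpow_of_nonneg dist_nonneg r0.coe_nonneg,
    ← ENNReal.ofReal_coe_nnreal, ← ENNReal.ofReal_mul C.coe_nonneg] at h2
  exact (ENNReal.ofReal_le_ofReal_iff (by positivity)).1 h2

private lemma holderOnWith_of_dist_le {X Y : Type*} [PseudoMetricSpace X] [PseudoMetricSpace Y]
    {C r0 : ℝ≥0} {f : X → Y} {s : Set X}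
    (h : ∀ x ∈ s, ∀ y ∈ s, dist (f x) (f y) ≤ C * dist x y ^ (r0 : ℝ)) :
    HolderOnWith C r0 f s := by
  intro x hx y hy
  rw [edist_dist, edist_dist, ENNReal.ofReal_rpow_of_nonneg dist_nonneg r0.coe_nonneg,
    ← ENNReal.ofReal_coe_nnreal, ← ENNReal.ofReal_mul C.coe_nonneg]
  exact ENNReal.ofReal_le_ofReal (h x hx y hy)

private lemma integrable_rpow_aux {e t u : ℝ} (ht : 0 < t) (htu : t ≤ u) :
    IntervalIntegrable (fun s : ℝ => s ^ e) volume t u := by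
  apply intervalIntegrable_rpow (Or.inr ?_)
  rw [Set.uIcc_of_le htu]
  exact fun h => absurd h.1 (not_le.2 ht)

private lemma int_rpow_le {e t u : ℝ} (he : e < -1) (ht : 0 < t) (htu : t ≤ u) :
    ∫ s in t..u, s ^ e ≤ t ^ (e + 1) / (-(e + 1)) := by
  have h0 : (0:ℝ) ∉ [[t, u]] := by
    rw [Set.uIcc_of_le htu]; exact fun h => absurd h.1 (not_le.2 ht)
  have hz : (0:ℝ) < -(e + 1) := by linarith
  have hB : 0 ≤ u ^ (e + 1) := Real.rpow_nonneg (ht.le.trans htu) _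
  rw [integral_rpow (Or.inr ⟨he.ne, h0⟩)]
  have key : (u ^ (e+1) - t ^ (e+1)) / (e+1) = (t ^ (e+1) - u ^ (e+1)) / (-(e+1)) := by
    rw [div_eq_div_iff (by linarith) (by linarith)]; ring
  rw [key]
  exact (div_le_div_iff_of_pos_right hz).2 (by linarith)

private lemma int_rpow_le_mul {e t u : ℝ} (he : e ≤ 0) (ht : 0 < t) (htu : t ≤ u) :
    ∫ s in t..u, s ^ e ≤ t ^ e * (u - t) := by
  have h := intervalIntegral.integral_mono_on htu (integrable_rpow_aux ht htu)
    intervalIntegrable_const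
    (fun s hs => Real.rpow_le_rpow_of_nonpos ht hs.1 he)
  simpa [intervalIntegral.integral_const, smul_eq_mul, mul_comm] using h

private lemma rpow_sub_le' {b t u : ℝ} (hb : 1 ≤ b) (ht : 0 ≤ t) (htu : t ≤ u) :
    u ^ b - t ^ b ≤ b * u ^ (b - 1) * (u - t) := by
  have hb0 : (0:ℝ) < b := by linarith
  have h1 : ∫ s in t..u, s ^ (b-1) = (u ^ b - t ^ b) / b := by
    rw [integral_rpow (Or.inl (by linarith))]
    rw [show b - 1 + 1 = b by ring]
  have h2 : ∫ s in t..u, s ^ (b-1) ≤ u ^ (b-1) * (u - t) := by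
    have h := intervalIntegral.integral_mono_on htu
      (intervalIntegrable_rpow (μ := volume) (r := b - 1) (Or.inl (by linarith))) intervalIntegrable_const
      (fun s hs => Real.rpow_le_rpow (ht.trans hs.1) hs.2 (by linarith))
    simpa [intervalIntegral.integral_const, smul_eq_mul, mul_comm] using h
  rw [h1] at h2
  calc u ^ b - t ^ b = b * ((u ^ b - t ^ b) / b) := by field_simp
    _ ≤ b * (u ^ (b-1) * (u - t)) := mul_le_mul_of_nonneg_left h2 hb0.le
    _ = b * u ^ (b-1) * (u - t) := by ring

private lemma abs_integral_le₁ {g : ℝ → ℝ} {M e t u : ℝ} (hM : 0 ≤ M)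
    (hg : IntervalIntegrable g volume t u)
    (hb : ∀ s ∈ Icc t u, |g s| ≤ M * s ^ e)
    (he : e < -1) (ht : 0 < t) (htu : t ≤ u) :
    |∫ s in t..u, g s| ≤ M * (t ^ (e + 1) / (-(e + 1))) := by
  have hint : IntervalIntegrable (fun s : ℝ => M * s ^ e) volume t u :=
    (integrable_rpow_aux ht htu).const_mul M
  calc |∫ s in t..u, g s| ≤ ∫ s in t..u, |g s| := by
        simpa [Real.norm_eq_abs] using
          intervalIntegral.norm_integral_le_integral_norm (f := g) (μ := volume) htu
    _ ≤ ∫ s in t..u, M * s ^ e := intervalIntegral.integral_mono_on htu hg.abs hint hb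
    _ = M * ∫ s in t..u, s ^ e := by rw [intervalIntegral.integral_const_mul]
    _ ≤ M * (t ^ (e+1) / (-(e+1))) := mul_le_mul_of_nonneg_left (int_rpow_le he ht htu) hM

private lemma abs_integral_le₂ {g : ℝ → ℝ} {M e t u : ℝ} (hM : 0 ≤ M)
    (hg : IntervalIntegrable g volume t u)
    (hb : ∀ s ∈ Icc t u, |g s| ≤ M * s ^ e)
    (he : e ≤ 0) (ht : 0 < t) (htu : t ≤ u) :
    |∫ s in t..u, g s| ≤ M * (t ^ e * (u - t)) := by
  have hint : IntervalIntegrable (fun s : ℝ => M * s ^ e) volume t u :=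
    (integrable_rpow_aux ht htu).const_mul M
  calc |∫ s in t..u, g s| ≤ ∫ s in t..u, |g s| := by
        simpa [Real.norm_eq_abs] using
          intervalIntegral.norm_integral_le_integral_norm (f := g) (μ := volume) htu
    _ ≤ ∫ s in t..u, M * s ^ e := intervalIntegral.integral_mono_on htu hg.abs hint hb
    _ = M * ∫ s in t..u, s ^ e := by rw [intervalIntegral.integral_const_mul]
    _ ≤ M * (t ^ e * (u - t)) := mul_le_mul_of_nonneg_left (int_rpow_le_mul he ht htu) hM

private lemma pow_trick {α t δ : ℝ} (hα0 : 0 < α) (hα1 : α ≤ 1) (hδ : 0 < δ) (hδt : δ ≤ t) :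
    t ^ (α - 1) * δ ≤ δ ^ α := by
  have ht : 0 < t := hδ.trans_le hδt
  have h1 : δ ^ α * δ ^ (1-α) = δ := by
    rw [← Real.rpow_add hδ, show α + (1-α) = 1 by ring, Real.rpow_one]
  calc t ^ (α-1) * δ = t ^ (α-1) * (δ ^ α * δ ^ (1-α)) := by rw [h1]
    _ ≤ t ^ (α-1) * (δ ^ α * t ^ (1-α)) := by
        apply mul_le_mul_of_nonneg_left _ (Real.rpow_nonneg ht.le _)
        exact mul_le_mul_of_nonneg_left
          (Real.rpow_le_rpow hδ.le hδt (by linarith)) (Real.rpow_nonneg hδ.le _)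
    _ = δ ^ α * (t ^ (α-1) * t ^ (1-α)) := by ring
    _ = δ ^ α := by
        rw [← Real.rpow_add ht, show α - 1 + (1-α) = 0 by ring, Real.rpow_zero, mul_one]

/-- Lemma A.5: let `a ≤ -2` and `α ∈ (0,1)`. If `f` is `α`-Hölder on `closure G_r`
with `f(y',0) = 0`, then `F(y',t) = t^{-(a+1)} ∫_t^r s^a f(y',s) ds` is `α`-Hölder
on `closure G_r`. -/
theorem stmt_5 {m : ℕ} {r a α : ℝ} (hr : 0 < r) (ha : a ≤ -2)
    (hα : α ∈ Set.Ioo (0 : ℝ) 1)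
    {f : EuclideanSpace ℝ (Fin m) × ℝ → ℝ} {Cf : NNReal}
    (hf : HolderOnWith Cf ⟨α, le_of_lt hα.1⟩ f (closure (Gset m r)))
    (hzero : ∀ y' ∈ closure (Metric.ball (0 : EuclideanSpace ℝ (Fin m)) r), f (y', 0) = 0) :
    ∃ C : NNReal, HolderOnWith C ⟨α, le_of_lt hα.1⟩
      (fun p : EuclideanSpace ℝ (Fin m) × ℝ =>
        p.2 ^ (-(a + 1)) * ∫ s in p.2..r, s ^ a * f (p.1, s))
      (closure (Gset m r)) := by
  obtain ⟨hα0, hα1⟩ := hα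
  have hclos : closure (Gset m r)
      = Metric.closedBall (0 : EuclideanSpace ℝ (Fin m)) r ×ˢ Icc (0:ℝ) r := by
    unfold Gset
    rw [closure_prod_eq, closure_ball 0 hr.ne', closure_Ioo hr.ne]
  have hball : closure (Metric.ball (0 : EuclideanSpace ℝ (Fin m)) r)
      = Metric.closedBall 0 r := closure_ball 0 hr.ne'
  rw [hball] at hzero
  rw [hclos] at hf ⊢
  set cb := Metric.closedBall (0 : EuclideanSpace ℝ (Fin m)) r with hcb
  set S := cb ×ˢ Icc (0:ℝ) r with hSdef
  set F := fun p : EuclideanSpace ℝ (Fin m) × ℝ =>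
    p.2 ^ (-(a + 1)) * ∫ s in p.2..r, s ^ a * f (p.1, s) with hFdef
  set K : ℝ := (Cf : ℝ) with hKdef
  have hK : 0 ≤ K := Cf.coe_nonneg
  have hb0 : (0:ℝ) < -(a+1) := by linarith
  have hb1 : (1:ℝ) ≤ -(a+1) := by linarith
  have hc0 : (0:ℝ) < -(a+α+1) := by linarith
  have hcont : ContinuousOn f S := hf.continuousOn (by exact_mod_cast hα0)
  -- pointwise bound on f
  have hfb : ∀ y ∈ cb, ∀ s ∈ Icc (0:ℝ) r, |f (y, s)| ≤ K * s ^ α := by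
    intro y hy s hs
    have h1 : ((y, s) : _ × ℝ) ∈ S := ⟨hy, hs⟩
    have h2 : ((y, 0) : _ × ℝ) ∈ S := ⟨hy, le_refl 0, hr.le⟩
    have hd : dist ((y, s) : _ × ℝ) (y, 0) = s := by
      rw [Prod.dist_eq, dist_self, Real.dist_eq, sub_zero, abs_of_nonneg hs.1]
      exact max_eq_right hs.1
    have h3 := holderOnWith_dist_le hf h1 h2
    rw [hd, hzero y hy, Real.dist_eq, sub_zero] at h3
    exact h3
  -- difference bound on f
  have hfd : ∀ y ∈ cb, ∀ z ∈ cb, ∀ s ∈ Icc (0:ℝ) r,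
      |f (y, s) - f (z, s)| ≤ K * dist y z ^ α := by
    intro y hy z hz s hs
    have h1 : ((y, s) : _ × ℝ) ∈ S := ⟨hy, hs⟩
    have h2 : ((z, s) : _ × ℝ) ∈ S := ⟨hz, hs⟩
    have hd : dist ((y, s) : _ × ℝ) (z, s) = dist y z := by
      rw [Prod.dist_eq, dist_self]
      exact max_eq_left dist_nonneg
    have h3 := holderOnWith_dist_le hf h1 h2
    rw [hd, Real.dist_eq] at h3
    exact h3
  -- interval integrability
  have hgint : ∀ y ∈ cb, ∀ t u : ℝ, 0 < t → t ≤ u → u ≤ r →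
      IntervalIntegrable (fun s => s ^ a * f (y, s)) volume t u := by
    intro y hy t u ht htu hu
    apply ContinuousOn.intervalIntegrable
    rw [Set.uIcc_of_le htu]
    apply ContinuousOn.mul
    · intro s hs
      exact (Real.continuousAt_rpow_const s a
        (Or.inl (ne_of_gt (lt_of_lt_of_le ht hs.1)))).continuousWithinAt
    · apply hcont.comp (Continuous.continuousOn (by continuity))
      intro s hs
      exact ⟨hy, le_of_lt (lt_of_lt_of_le ht hs.1), hs.2.trans hu⟩
  -- pointwise bound on integrand
  have hgb : ∀ y ∈ cb, ∀ t : ℝ, 0 < t → ∀ s ∈ Icc t r, |s ^ a * f (y, s)| ≤ K * s ^ (a + α) := by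
    intro y hy t ht s hs
    have hs0 : 0 < s := lt_of_lt_of_le ht hs.1
    rw [abs_mul, abs_of_nonneg (Real.rpow_nonneg hs0.le a), Real.rpow_add hs0]
    calc s ^ a * |f (y, s)| ≤ s ^ a * (K * s ^ α) :=
          mul_le_mul_of_nonneg_left (hfb y hy s ⟨hs0.le, hs.2⟩) (Real.rpow_nonneg hs0.le a)
      _ = K * (s ^ a * s ^ α) := by ring
  -- bound |F| ≤ (K/c) t^α
  have hFb : ∀ y ∈ cb, ∀ t ∈ Icc (0:ℝ) r, |F (y, t)| ≤ K / (-(a+α+1)) * t ^ α := by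
    intro y hy t ht
    rcases eq_or_lt_of_le ht.1 with h0 | h0
    · simp only [hFdef, ← h0, Real.zero_rpow (ne_of_gt hb0), zero_mul, abs_zero]
      positivity
    · have hI := abs_integral_le₁ hK (hgint y hy t r h0 ht.2 le_rfl)
        (hgb y hy t h0) (by linarith) h0 ht.2
      have htp : 0 ≤ t ^ (-(a+1)) := Real.rpow_nonneg h0.le _
      calc |F (y, t)| = t ^ (-(a+1)) * |∫ s in t..r, s ^ a * f (y, s)| := by
            rw [hFdef, abs_mul, abs_of_nonneg htp]
        _ ≤ t ^ (-(a+1)) * (K * (t ^ (a+α+1) / (-(a+α+1)))) :=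
            mul_le_mul_of_nonneg_left hI htp
        _ = K / (-(a+α+1)) * (t ^ (-(a+1)) * t ^ (a+α+1)) := by ring
        _ = K / (-(a+α+1)) * t ^ α := by
            rw [← Real.rpow_add h0, show -(a+1) + (a+α+1) = α by ring]
  -- Hölder in y
  have hFy : ∀ y ∈ cb, ∀ z ∈ cb, ∀ t ∈ Icc (0:ℝ) r,
      |F (y, t) - F (z, t)| ≤ K / (-(a+1)) * dist y z ^ α := by
    intro y hy z hz t ht
    rcases eq_or_lt_of_le ht.1 with h0 | h0
    · simp only [hFdef, ← h0, Real.zero_rpow (ne_of_gt hb0), zero_mul, sub_zero, abs_zero]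
      positivity
    · have hint1 := hgint y hy t r h0 ht.2 le_rfl
      have hint2 := hgint z hz t r h0 ht.2 le_rfl
      have hdiff : F (y, t) - F (z, t)
          = t ^ (-(a+1)) * ∫ s in t..r, (s ^ a * f (y, s) - s ^ a * f (z, s)) := by
        rw [hFdef]
        simp only
        rw [intervalIntegral.integral_sub hint1 hint2]
        ring
      have hb : ∀ s ∈ Icc t r, |s ^ a * f (y, s) - s ^ a * f (z, s)|
          ≤ (K * dist y z ^ α) * s ^ a := by
        intro s hs
        have hs0 : 0 < s := lt_of_lt_of_le h0 hs.1
        rw [← mul_sub, abs_mul, abs_of_nonneg (Real.rpow_nonneg hs0.le a)]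
        calc s ^ a * |f (y, s) - f (z, s)| ≤ s ^ a * (K * dist y z ^ α) :=
              mul_le_mul_of_nonneg_left (hfd y hy z hz s ⟨hs0.le, hs.2⟩)
                (Real.rpow_nonneg hs0.le a)
          _ = (K * dist y z ^ α) * s ^ a := by ring
      have hI := abs_integral_le₁ (by positivity) (hint1.sub hint2) hb (by linarith) h0 ht.2
      have htp : 0 ≤ t ^ (-(a+1)) := Real.rpow_nonneg h0.le _
      calc |F (y, t) - F (z, t)|
          = t ^ (-(a+1)) * |∫ s in t..r, (s ^ a * f (y, s) - s ^ a * f (z, s))| := by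
            rw [hdiff, abs_mul, abs_of_nonneg htp]
        _ ≤ t ^ (-(a+1)) * ((K * dist y z ^ α) * (t ^ (a+1) / (-(a+1)))) :=
            mul_le_mul_of_nonneg_left hI htp
        _ = K / (-(a+1)) * dist y z ^ α * (t ^ (-(a+1)) * t ^ (a+1)) := by ring
        _ = K / (-(a+1)) * dist y z ^ α := by
            rw [← Real.rpow_add h0, show -(a+1) + (a+1) = 0 by ring, Real.rpow_zero, mul_one]
  -- Hölder in t
  have hFt : ∀ z ∈ cb, ∀ t t' : ℝ, t ∈ Icc (0:ℝ) r → t' ∈ Icc (0:ℝ) r → t ≤ t' →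
      |F (z, t) - F (z, t')| ≤ (3 * K / (-(a+α+1)) + K * (-(a+1)) / (-(a+α+1)) + K)
        * (t' - t) ^ α := by
    intro z hz t t' ht ht' htt
    rcases eq_or_lt_of_le htt with heq | hlt
    · rw [heq, sub_self, abs_zero, sub_self, Real.zero_rpow (ne_of_gt hα0), mul_zero]
    have hδ : 0 < t' - t := by linarith
    rcases le_or_gt t (t' - t) with hcase | hcase
    · -- far case: use sup bound
      have h1 := hFb z hz t ht
      have h2 := hFb z hz t' ht'
      have e1 : t ^ α ≤ (t' - t) ^ α := Real.rpow_le_rpow ht.1 hcase hα0.le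
      have e2 : t' ^ α ≤ 2 * (t' - t) ^ α := by
        calc t' ^ α ≤ (2 * (t' - t)) ^ α :=
              Real.rpow_le_rpow ht'.1 (by linarith) hα0.le
          _ = 2 ^ α * (t' - t) ^ α := Real.mul_rpow (by norm_num) hδ.le
          _ ≤ 2 ^ (1:ℝ) * (t' - t) ^ α := by
              apply mul_le_mul_of_nonneg_right _ (Real.rpow_nonneg hδ.le α)
              exact Real.rpow_le_rpow_of_exponent_le (by norm_num) hα1.le
          _ = 2 * (t' - t) ^ α := by rw [Real.rpow_one]
      have : |F (z, t) - F (z, t')| ≤ |F (z, t)| + |F (z, t')| := abs_sub _ _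
      have hKc : 0 ≤ K / (-(a+α+1)) := by positivity
      calc |F (z, t) - F (z, t')| ≤ |F (z, t)| + |F (z, t')| := abs_sub _ _
        _ ≤ K / (-(a+α+1)) * t ^ α + K / (-(a+α+1)) * t' ^ α := add_le_add h1 h2
        _ ≤ K / (-(a+α+1)) * (t' - t) ^ α + K / (-(a+α+1)) * (2 * (t' - t) ^ α) :=
            add_le_add (mul_le_mul_of_nonneg_left e1 hKc) (mul_le_mul_of_nonneg_left e2 hKc)
        _ = 3 * K / (-(a+α+1)) * (t' - t) ^ α := by ring
        _ ≤ (3 * K / (-(a+α+1)) + K * (-(a+1)) / (-(a+α+1)) + K) * (t' - t) ^ α := by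
            apply mul_le_mul_of_nonneg_right _ (Real.rpow_nonneg hδ.le α)
            have : 0 ≤ K * (-(a+1)) / (-(a+α+1)) := by positivity
            linarith
    · -- near case: 0 < t' - t < t, so 0 < t
      have ht0 : 0 < t := hδ.trans hcase
      have ht'0 : 0 < t' := ht0.trans hlt
      have hint1 := hgint z hz t t' ht0 htt ht'.2
      have hint2 := hgint z hz t' r ht'0 ht'.2 le_rfl
      have hsplit : (∫ s in t..r, s ^ a * f (z, s))
          = (∫ s in t..t', s ^ a * f (z, s)) + ∫ s in t'..r, s ^ a * f (z, s) :=
        (intervalIntegral.integral_add_adjacent_intervals hint1 hint2).symm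
      have hdiff : F (z, t) - F (z, t')
          = t ^ (-(a+1)) * (∫ s in t..t', s ^ a * f (z, s))
            + (t ^ (-(a+1)) - t' ^ (-(a+1))) * ∫ s in t'..r, s ^ a * f (z, s) := by
        rw [hFdef]
        simp only
        rw [hsplit]
        ring
      -- term 1
      have hI1 := abs_integral_le₂ hK hint1
        (fun s hs => hgb z hz t ht0 s ⟨hs.1, hs.2.trans ht'.2⟩) (by linarith) ht0 htt
      have hterm1 : |t ^ (-(a+1)) * ∫ s in t..t', s ^ a * f (z, s)| ≤ K * (t' - t) ^ α := by
        have htp : 0 ≤ t ^ (-(a+1)) := Real.rpow_nonneg ht0.le _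
        calc |t ^ (-(a+1)) * ∫ s in t..t', s ^ a * f (z, s)|
            = t ^ (-(a+1)) * |∫ s in t..t', s ^ a * f (z, s)| := by
              rw [abs_mul, abs_of_nonneg htp]
          _ ≤ t ^ (-(a+1)) * (K * (t ^ (a+α) * (t' - t))) := mul_le_mul_of_nonneg_left hI1 htp
          _ = K * (t ^ (-(a+1)) * t ^ (a+α) * (t' - t)) := by ring
          _ = K * (t ^ (α - 1) * (t' - t)) := by
              rw [← Real.rpow_add ht0, show -(a+1) + (a+α) = α - 1 by ring]
          _ ≤ K * (t' - t) ^ α :=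
              mul_le_mul_of_nonneg_left (pow_trick hα0 hα1.le hδ hcase.le) hK
      -- term 2
      have hI2 := abs_integral_le₁ hK (hgint z hz t' r ht'0 ht'.2 le_rfl)
        (hgb z hz t' ht'0) (by linarith) ht'0 ht'.2
      have hmono : t ^ (-(a+1)) ≤ t' ^ (-(a+1)) := Real.rpow_le_rpow ht0.le htt hb0.le
      have hsub : t' ^ (-(a+1)) - t ^ (-(a+1))
          ≤ (-(a+1)) * t' ^ (-(a+1) - 1) * (t' - t) := rpow_sub_le' hb1 ht0.le htt
      have hterm2 : |(t ^ (-(a+1)) - t' ^ (-(a+1))) * ∫ s in t'..r, s ^ a * f (z, s)|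
          ≤ K * (-(a+1)) / (-(a+α+1)) * (t' - t) ^ α := by
        rw [abs_mul]
        have habs : |t ^ (-(a+1)) - t' ^ (-(a+1))| = t' ^ (-(a+1)) - t ^ (-(a+1)) := by
          rw [abs_sub_comm, abs_of_nonneg (by linarith)]
        rw [habs]
        calc (t' ^ (-(a+1)) - t ^ (-(a+1))) * |∫ s in t'..r, s ^ a * f (z, s)|
            ≤ ((-(a+1)) * t' ^ (-(a+1) - 1) * (t' - t)) * (K * (t' ^ (a+α+1) / (-(a+α+1)))) := by
              apply mul_le_mul hsub hI2 (abs_nonneg _)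
              positivity
          _ = K * (-(a+1)) / (-(a+α+1)) * (t' ^ (-(a+1) - 1) * t' ^ (a+α+1) * (t' - t)) := by
              ring
          _ = K * (-(a+1)) / (-(a+α+1)) * (t' ^ (α - 1) * (t' - t)) := by
              rw [← Real.rpow_add ht'0, show -(a+1) - 1 + (a+α+1) = α - 1 by ring]
          _ ≤ K * (-(a+1)) / (-(a+α+1)) * (t' - t) ^ α := by
              apply mul_le_mul_of_nonneg_left
                (pow_trick hα0 hα1.le hδ (by linarith)) (by positivity)
      calc |F (z, t) - F (z, t')|
          ≤ |t ^ (-(a+1)) * ∫ s in t..t', s ^ a * f (z, s)|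
            + |(t ^ (-(a+1)) - t' ^ (-(a+1))) * ∫ s in t'..r, s ^ a * f (z, s)| := by
            rw [hdiff]; exact abs_add_le _ _
        _ ≤ K * (t' - t) ^ α + K * (-(a+1)) / (-(a+α+1)) * (t' - t) ^ α :=
            add_le_add hterm1 hterm2
        _ = (K + K * (-(a+1)) / (-(a+α+1))) * (t' - t) ^ α := by ring
        _ ≤ (3 * K / (-(a+α+1)) + K * (-(a+1)) / (-(a+α+1)) + K) * (t' - t) ^ α := by
            apply mul_le_mul_of_nonneg_right _ (Real.rpow_nonneg hδ.le α)
            have h3 : 0 ≤ 3 * K / (-(a+α+1)) := by positivity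
            linarith
  -- assemble
  set C2 : ℝ := 3 * K / (-(a+α+1)) + K * (-(a+1)) / (-(a+α+1)) + K with hC2
  have hC2nn : 0 ≤ C2 := by
    have : 0 ≤ 3 * K / (-(a+α+1)) := by positivity
    have : 0 ≤ K * (-(a+1)) / (-(a+α+1)) := by positivity
    simp only [hC2]; positivity
  set C0 : ℝ := K / (-(a+1)) + C2 with hC0
  have hC0nn : 0 ≤ C0 := by
    simp only [hC0, hC2]
    positivity
  refine ⟨C0.toNNReal, holderOnWith_of_dist_le ?_⟩
  intro p hp q hq
  obtain ⟨y, t⟩ := p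
  obtain ⟨z, t'⟩ := q
  obtain ⟨hy, ht⟩ := hp
  obtain ⟨hz, ht'⟩ := hq
  have hcoe : ((C0.toNNReal : ℝ≥0) : ℝ) = C0 := Real.coe_toNNReal _ hC0nn
  rw [hcoe]
  have hd1 : dist y z ≤ dist ((y, t) : _ × ℝ) (z, t') := by
    rw [Prod.dist_eq]; exact le_max_left _ _
  have hd2 : dist t t' ≤ dist ((y, t) : _ × ℝ) (z, t') := by
    rw [Prod.dist_eq]; exact le_max_right _ _
  set d : ℝ := dist ((y, t) : _ × ℝ) (z, t') with hdd
  have hdnn : 0 ≤ d := dist_nonneg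
  have hstep1 : |F (y, t) - F (z, t)| ≤ K / (-(a+1)) * d ^ α := by
    calc |F (y, t) - F (z, t)| ≤ K / (-(a+1)) * dist y z ^ α := hFy y hy z hz t ht
      _ ≤ K / (-(a+1)) * d ^ α := by
          apply mul_le_mul_of_nonneg_left
            (Real.rpow_le_rpow dist_nonneg hd1 hα0.le) (by positivity)
  have hstep2 : |F (z, t) - F (z, t')| ≤ C2 * d ^ α := by
    rcases le_total t t' with h | h
    · calc |F (z, t) - F (z, t')| ≤ C2 * (t' - t) ^ α := hFt z hz t t' ht ht' h
        _ ≤ C2 * d ^ α := by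
            apply mul_le_mul_of_nonneg_left _ hC2nn
            apply Real.rpow_le_rpow (by linarith) _ hα0.le
            rw [hdd]
            calc t' - t ≤ |t - t'| := by rw [abs_sub_comm]; exact le_abs_self _
              _ ≤ _ := by rw [← Real.dist_eq]; exact hd2
    · calc |F (z, t) - F (z, t')| = |F (z, t') - F (z, t)| := abs_sub_comm _ _
        _ ≤ C2 * (t - t') ^ α := hFt z hz t' t ht' ht h
        _ ≤ C2 * d ^ α := by
            apply mul_le_mul_of_nonneg_left _ hC2nn
            apply Real.rpow_le_rpow (by linarith) _ hα0.le
            rw [hdd]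
            calc t - t' ≤ |t - t'| := le_abs_self _
              _ ≤ _ := by rw [← Real.dist_eq]; exact hd2
  have hdF : dist (F (y, t)) (F (z, t')) ≤ |F (y, t) - F (z, t)| + |F (z, t) - F (z, t')| := by
    rw [Real.dist_eq]
    have heq : F (y, t) - F (z, t') = (F (y, t) - F (z, t)) + (F (z, t) - F (z, t')) := by
      ring
    rw [heq]
    exact abs_add_le _ _
  calc dist (F (y, t)) (F (z, t')) ≤ |F (y, t) - F (z, t)| + |F (z, t) - F (z, t')| := hdF
    _ ≤ K / (-(a+1)) * d ^ α + C2 * d ^ α := add_le_add hstep1 hstep2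
    _ = C0 * d ^ α := by rw [hC0]; ring
    _ = C0 * dist ((y, t) : _ × ℝ) (z, t') ^ (((⟨α, le_of_lt hα0⟩ : ℝ≥0)) : ℝ) := by
        rw [hdd]
end

section
/- Let $p, q$ be real constants and let $v$ be a twice continuously differentiable function on $(0,r)$ satisfying the Euler-type equation $v'' + p\,v'/t + q\,v/t^2 + F = 0$ on $(0,r)$, where $F \in C^1((0,r))$. Define $w(t) = v'(t) - 2v(t)/t$. Then $w$ satisfies $w'' + (p+2)\,w'/t + (p+q)\,w/t^2 + F' = 0$ on $(0,r)$. -/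
open Set

/-- The key induction step (B.2): if `v'' + p v'/t + q v/t² + F = 0` on `(0,r)` with
`F ∈ C¹`, then `w = v' - 2v/t` satisfies `w'' + (p+2) w'/t + (p+q) w/t² + F' = 0`. -/
theorem stmt_8 (r p q : ℝ) (hr : 0 < r) (v v' v'' F F' : ℝ → ℝ)
    (hv : ∀ t ∈ Set.Ioo (0 : ℝ) r, HasDerivAt v (v' t) t)
    (hv' : ∀ t ∈ Set.Ioo (0 : ℝ) r, HasDerivAt v' (v'' t) t)
    (hv'' : ContinuousOn v'' (Set.Ioo (0 : ℝ) r))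
    (hF : ∀ t ∈ Set.Ioo (0 : ℝ) r, HasDerivAt F (F' t) t)
    (heq : ∀ t ∈ Set.Ioo (0 : ℝ) r, v'' t + p * v' t / t + q * v t / t ^ 2 + F t = 0) :
    ∀ t ∈ Set.Ioo (0 : ℝ) r,
      deriv (deriv (fun s => v' s - 2 * v s / s)) t
        + (p + 2) * deriv (fun s => v' s - 2 * v s / s) t / t
        + (p + q) * (v' t - 2 * v t / t) / t ^ 2
        + F' t = 0 := by
  intro t ht
  have hmem : Set.Ioo (0 : ℝ) r ∈ nhds t := isOpen_Ioo.mem_nhds ht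
  have htne : t ≠ 0 := ne_of_gt ht.1
  -- the function h which eventually equals deriv w
  set h : ℝ → ℝ := fun s => -((p + 2) * v' s / s) - (q - 2) * (v s / s ^ 2) - F s with hh
  -- w has derivative g s on Ioo
  have hw : ∀ s ∈ Set.Ioo (0 : ℝ) r, HasDerivAt (fun s => v' s - 2 * v s / s)
      (v'' s - (2 * v' s * s - 2 * v s * 1) / s ^ 2) s := by
    intro s hs
    exact (hv' s hs).sub (((hv s hs).const_mul 2).div (hasDerivAt_id s) (ne_of_gt hs.1))
  -- deriv w = h on Ioo
  have hgh : ∀ s ∈ Set.Ioo (0 : ℝ) r,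
      v'' s - (2 * v' s * s - 2 * v s * 1) / s ^ 2 = h s := by
    intro s hs
    have hsne : s ≠ 0 := ne_of_gt hs.1
    have h0 := heq s hs
    have hvs : v'' s = -(p * v' s / s + q * v s / s ^ 2 + F s) := by linarith
    rw [hvs, hh]
    field_simp
    ring
  have hderivw : deriv (fun s => v' s - 2 * v s / s) =ᶠ[nhds t] h := by
    filter_upwards [hmem] with s hs
    rw [(hw s hs).deriv]
    exact hgh s hs
  -- derivative of h at t
  have hht : HasDerivAt h
      (-(((p + 2) * v'' t * t - (p + 2) * v' t * 1) / t ^ 2)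
        - (q - 2) * ((v' t * t ^ 2 - v t * (↑2 * t ^ 1)) / (t ^ 2) ^ 2) - F' t) t := by
    exact ((((hv' t ht).const_mul (p + 2)).div (hasDerivAt_id t) htne).neg.sub
      (((hv t ht).div (hasDerivAt_pow 2 t) (pow_ne_zero 2 htne)).const_mul (q - 2))).sub
      (hF t ht)
  have h2 : deriv (deriv (fun s => v' s - 2 * v s / s)) t
      = -(((p + 2) * v'' t * t - (p + 2) * v' t * 1) / t ^ 2)
        - (q - 2) * ((v' t * t ^ 2 - v t * (↑2 * t ^ 1)) / (t ^ 2) ^ 2) - F' t := by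
    rw [hderivw.deriv_eq, hht.deriv]
  have h1 : deriv (fun s => v' s - 2 * v s / s) t
      = v'' t - (2 * v' t * t - 2 * v t * 1) / t ^ 2 := (hw t ht).deriv
  rw [h1, h2]
  field_simp
  ring
end
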